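/- arXiv:0809.3683 — 3 statements merged into one kernel-verified Lean document; each statement's English description precedes it below -/
import Mathlib

section
/- For every m ≥ 1 and n ≥ 1, the number of sequences (a_1,...,a_n) of nonnegative integers satisfying a_1 = 0 and a_{s+1} ≤ a_s + m for all s = 1,...,n-1 equals the nth Fuss–Catalan number c_n^(m) = (1/(mn+1)) * binomial((m+1)n, n). -/
/-!
A sequence `a` is encoded by the positions `t j = (m + 1) * j - a j`, an `n`-subset of
`{0, …, (m + 1) n}`. Reading the subset as a lattice path with an up-step of height `m` at each
of its positions and a down-step of height `1` elsewhere, the conditions on `a` say exactly that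
the path stays nonnegative before its last step. Every `n`-subset gives a path of total
height `-1`, so by Raney's cycle lemma exactly one of its `(m + 1) n + 1` cyclic rotations has
this property. Hence `(m + 1) n + 1` times the number of sequences is
`binomial((m + 1) n + 1, n)`.
-/

open Finset Fin.NatCast Pointwise Set.powersetCard

section OrbitCount

variable {G α : Type*} [AddGroup G] [AddAction G α]

noncomputable def AddAction.equivProdOfExistsUniqueVAdd (P : α → Prop)
    (h : ∀ x, ∃! g : G, P (g +ᵥ x)) : α ≃ {x // P x} × G where
  toFun x := (⟨(h x).choose +ᵥ x, (h x).choose_spec.1⟩, (h x).choose)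
  invFun y := -y.2 +ᵥ y.1.1
  left_inv x := neg_vadd_vadd _ x
  right_inv := by
    rintro ⟨⟨y, hy⟩, g⟩
    have hg : (h (-g +ᵥ y)).choose = g :=
      ((h (-g +ᵥ y)).choose_spec.2 g (by simpa only [vadd_neg_vadd])).symm
    ext
    · simp only [hg, vadd_neg_vadd]
    · exact hg

theorem AddAction.card_eq_card_mul_card_of_existsUnique_vadd (P : α → Prop)
    (h : ∀ x, ∃! g : G, P (g +ᵥ x)) : Nat.card α = Nat.card {x // P x} * Nat.card G := by
  rw [Nat.card_congr (equivProdOfExistsUniqueVAdd P h), Nat.card_prod]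

end OrbitCount

theorem Fin.strictMono_of_lt_add_one {α : Type*} [Preorder α] {n : ℕ} {f : Fin n → α}
    (h : ∀ s : Fin n, ∀ hs : (s : ℕ) + 1 < n, f s < f ⟨s + 1, hs⟩) : StrictMono f := by
  cases n with
  | zero => exact fun a => a.elim0
  | succ n => exact Fin.strictMono_iff_lt_succ.2 fun i => h i.castSucc (by simp)

theorem Finset.sum_ite_neg_one {ι : Type*} (T : Finset ι) (p : ι → Prop) [DecidablePred p]
    (c : ℤ) : ∑ i ∈ T, (if p i then c else -1) = (c + 1) * #{i ∈ T | p i} - #T := by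
  rw [sum_ite, sum_const, sum_const, ← card_filter_add_card_filter_not (s := T) p]
  push_cast
  ring

section Raney

variable {L : ℕ} [NeZero L] (x : Fin L → ℤ)

def partialSum (k : ℕ) : ℤ := ∑ i ∈ range k, x (i : Fin L)

theorem sum_range_rotate_eq_partialSum_sub (r : Fin L) (k : ℕ) :
    ∑ i ∈ range k, x (r + (i : Fin L)) = partialSum x (r + k) - partialSum x r := by
  simp only [partialSum, sum_range_add, Nat.cast_add, Fin.cast_val_eq_self]
  ring

theorem partialSum_add_length (k : ℕ) :
    partialSum x (k + L) = partialSum x k + ∑ i, x i := by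
  rw [partialSum, add_comm, sum_range_add,
    ← Fin.sum_univ_eq_sum_range (fun i => x (i : Fin L)) L]
  simp [partialSum, add_comm]

theorem not_forall_partialSum_le_of_lt (hx : ∑ i, x i = -1) {r r' : ℕ} (hr : r < r')
    (hr' : r' < L) (hgood : ∀ k < L, partialSum x r ≤ partialSum x (r + k)) :
    ¬ ∀ k < L, partialSum x r' ≤ partialSum x (r' + k) := by
  intro hgood'
  have h₁ := hgood (r' - r) (by omega)
  have h₂ := hgood' (r + L - r') (by omega)
  rw [Nat.add_sub_cancel' hr.le] at h₁
  rw [show r' + (r + L - r') = r + L by omega, partialSum_add_length, hx] at h₂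
  omega

/-- Raney's cycle lemma. The good rotation starts at the first minimum of the partial sums, which
drop by `1` after each full period. -/
theorem existsUnique_forall_sum_range_add_nonneg (hx : ∑ i, x i = -1) :
    ∃! r : Fin L, ∀ k < L, 0 ≤ ∑ i ∈ range k, x (r + (i : Fin L)) := by
  simp only [sum_range_rotate_eq_partialSum_sub, sub_nonneg]
  have hmin : ∃ r, r < L ∧ ∀ j < L, partialSum x r ≤ partialSum x j := by
    obtain ⟨r, hr, hmin⟩ :=
      exists_min_image (range L) (partialSum x) (nonempty_range_iff.2 (NeZero.ne L))
    exact ⟨r, mem_range.1 hr, fun j hj => hmin j (mem_range.2 hj)⟩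
  obtain ⟨hr, hrmin⟩ := Nat.find_spec hmin
  have hgood : ∀ k < L, partialSum x (Nat.find hmin) ≤ partialSum x (Nat.find hmin + k) := by
    intro k hk
    rcases lt_or_ge (Nat.find hmin + k) L with hlt | hge
    · exact hrmin _ hlt
    · obtain ⟨j, hj⟩ := Nat.exists_eq_add_of_le hge
      have hjr : j < Nat.find hmin := by omega
      have hj_not_min := Nat.find_min hmin hjr
      push Not at hj_not_min
      obtain ⟨i, hi, hij⟩ := hj_not_min (hjr.trans hr)
      have := hrmin i hi
      simp only [hj, add_comm L j, partialSum_add_length, hx]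
      omega
  refine ⟨⟨Nat.find hmin, hr⟩, hgood, fun r hr' => Fin.ext ?_⟩
  rcases lt_trichotomy r.val (Nat.find hmin) with hlt | heq | hgt
  · exact absurd hgood (not_forall_partialSum_le_of_lt x hx hlt hr hr')
  · exact heq
  · exact absurd hr' (not_forall_partialSum_le_of_lt x hx hgt r.isLt hgood)

end Raney

section MDyck

variable (m : ℕ) {L : ℕ}

/-- `s` is the set of up-steps (of height `m`) of a lattice path of length `L` whose other steps
go down by `1`. When `#s = n` and `L = (m + 1) * n + 1`, `IsMDyck m s` says that the path is an
`m`-Dyck path followed by one down-step. -/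
def mDyckStep (s : Finset (Fin L)) (i : Fin L) : ℤ := if i ∈ s then m else -1

def IsMDyck [NeZero L] (s : Finset (Fin L)) : Prop :=
  ∀ k < L, 0 ≤ ∑ i ∈ range k, mDyckStep m s i

theorem sum_mDyckStep (s : Finset (Fin L)) : ∑ i, mDyckStep m s i = (m + 1) * #s - L := by
  simp [mDyckStep, sum_ite_neg_one]

theorem mDyckStep_add [NeZero L] (s : Finset (Fin L)) (r i : Fin L) :
    mDyckStep m s (r + i) = mDyckStep m (-r +ᵥ s) i := by
  simp [mDyckStep, mem_neg_vadd_finset_iff]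

theorem sum_range_mDyckStep [NeZero L] (s : Finset (Fin L)) (k : ℕ) :
    ∑ i ∈ range k, mDyckStep m s i = (m + 1) * #{i ∈ range k | ((i : ℕ) : Fin L) ∈ s} - k := by
  simp [mDyckStep, sum_ite_neg_one]

theorem card_filter_range_natCast_mem_range [NeZero L] {n k : ℕ} {t : Fin n → Fin L}
    (ht : t.Injective) (hk : k ≤ L) :
    #{i ∈ range k | ((i : ℕ) : Fin L) ∈ Set.range t} = #{a | (t a : ℕ) < k} := by
  rw [← card_image_of_injective _ (Fin.val_injective.comp ht)]
  congr 1
  ext i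
  simp only [mem_filter, mem_range, Set.mem_range, mem_image, mem_univ, true_and,
    Function.comp_apply]
  constructor
  · rintro ⟨hik, a, ha⟩
    refine ⟨a, ?_, ?_⟩ <;> rw [ha, Fin.val_natCast, Nat.mod_eq_of_lt (by omega)]
    exact hik
  · rintro ⟨a, hak, rfl⟩
    exact ⟨hak, a, by simp⟩

theorem forall_le_mul_card_lt_iff {n : ℕ} (t : Fin n ↪o Fin ((m + 1) * n + 1)) :
    (∀ k ≤ (m + 1) * n, k ≤ (m + 1) * #{a | (t a : ℕ) < k}) ↔ ∀ a, (t a : ℕ) ≤ (m + 1) * a := by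
  have hcard : ∀ a, #{b | (t b : ℕ) < t a} = a := by
    intro a
    rw [← Fin.card_Iio a]
    congr 1
    ext b
    simp
  constructor
  · intro h a
    have := h (t a) (Nat.lt_succ_iff.1 (t a).isLt)
    rwa [hcard] at this
  · intro h k hk
    set c := #{a | (t a : ℕ) < k} with hc
    rcases lt_or_ge c n with hcn | hcn
    · have hkc : k ≤ t ⟨c, hcn⟩ := by
        by_contra! hlt
        have hsub : Iic (⟨c, hcn⟩ : Fin n) ⊆ ({a | (t a : ℕ) < k} : Finset (Fin n)) := by
          intro a ha
          have : (t a : ℕ) ≤ t ⟨c, hcn⟩ := t.monotone (mem_Iic.1 ha)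
          simpa using this.trans_lt hlt
        simpa [← hc] using card_le_card hsub
      exact hkc.trans (h _)
    · exact hk.trans (Nat.mul_le_mul_left _ hcn)

theorem isMDyck_ofFinEmbEquiv_iff {n : ℕ} (t : Fin n ↪o Fin ((m + 1) * n + 1)) :
    IsMDyck m (ofFinEmbEquiv t : Finset (Fin ((m + 1) * n + 1))) ↔
      ∀ a, (t a : ℕ) ≤ (m + 1) * a := by
  rw [← forall_le_mul_card_lt_iff, IsMDyck]
  refine forall_congr' fun k => ?_
  rw [Nat.lt_succ_iff]
  refine forall_congr' fun hk => ?_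
  simp only [sum_range_mDyckStep, mem_coe_iff, mem_ofFinEmbEquiv_iff_mem_range,
    card_filter_range_natCast_mem_range t.injective (Nat.le_succ_of_le hk), sub_nonneg]
  norm_cast

theorem existsUnique_isMDyck_vadd {n : ℕ} (s : Finset (Fin ((m + 1) * n + 1))) (hs : #s = n) :
    ∃! g : Fin ((m + 1) * n + 1), IsMDyck m (g +ᵥ s) := by
  have hsum : ∑ i, mDyckStep m s i = -1 := by
    rw [sum_mDyckStep, hs]
    push_cast
    ring
  have : ∃! r : Fin ((m + 1) * n + 1), IsMDyck m (-r +ᵥ s) := by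
    simpa only [IsMDyck, mDyckStep_add] using existsUnique_forall_sum_range_add_nonneg _ hsum
  simpa only [Equiv.neg_symm, Equiv.neg_apply, neg_neg] using
    (Equiv.neg _).existsUnique_congr_left.1 this

end MDyck

section Sequences

variable {m n : ℕ}

theorem le_mul_of_forall_succ_le_add (hn : 0 < n) {a : Fin n → ℕ} (h0 : a ⟨0, hn⟩ = 0)
    (hstep : ∀ s : Fin n, ∀ h : (s : ℕ) + 1 < n, a ⟨(s : ℕ) + 1, h⟩ ≤ a s + m) (j : Fin n) :
    a j ≤ m * j := by
  obtain ⟨j, hj⟩ := j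
  induction j with
  | zero => simp [h0]
  | succ j ih =>
    have hj' : j < n := by omega
    have h₁ : a ⟨j + 1, hj⟩ ≤ a ⟨j, hj'⟩ + m := hstep ⟨j, hj'⟩ hj
    have h₂ : a ⟨j, hj'⟩ ≤ m * j := ih hj'
    rw [Nat.mul_succ]
    omega

/-- `t j` is the position of the `j`-th up-step and `a j` the height of the path just before it. -/
def mDyckSeqEquiv (hn : 0 < n) :
    {a : Fin n → ℕ // a ⟨0, hn⟩ = 0 ∧
      ∀ s : Fin n, ∀ h : (s : ℕ) + 1 < n, a ⟨(s : ℕ) + 1, h⟩ ≤ a s + m} ≃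
    {t : Fin n ↪o Fin ((m + 1) * n + 1) // ∀ j, (t j : ℕ) ≤ (m + 1) * j} where
  toFun a :=
    have hle (j : Fin n) : a.1 j ≤ (m + 1) * j :=
      (le_mul_of_forall_succ_le_add hn a.2.1 a.2.2 j).trans (Nat.mul_le_mul_right _ m.le_succ)
    ⟨OrderEmbedding.ofStrictMono
      (fun j => ⟨(m + 1) * j - a.1 j,
        (Nat.sub_le _ _).trans_lt (Nat.lt_succ_of_le (Nat.mul_le_mul_left _ j.isLt.le))⟩)
      (Fin.strictMono_of_lt_add_one fun s hs => by
        have := a.2.2 s hs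
        have := hle s
        simp only [Fin.mk_lt_mk, Nat.mul_succ]
        omega), fun j => Nat.sub_le _ _⟩
  invFun t := ⟨fun j => (m + 1) * j - t.1 j, by simp, fun s hs => by
    have hlt : t.1 s < t.1 ⟨s + 1, hs⟩ := t.1.strictMono (Fin.mk_lt_mk.2 s.val.lt_succ_self)
    have := t.2 s
    rw [Fin.lt_def] at hlt
    simp only [Nat.mul_succ]
    omega⟩
  left_inv a := by
    ext j
    exact Nat.sub_sub_self ((le_mul_of_forall_succ_le_add hn a.2.1 a.2.2 j).trans
      (Nat.mul_le_mul_right _ m.le_succ))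
  right_inv t := by
    ext j
    exact Nat.sub_sub_self (t.2 j)

end Sequences

theorem card_isMDyck_mul_length (m n : ℕ) :
    Nat.card {s : Set.powersetCard (Fin ((m + 1) * n + 1)) n //
      IsMDyck m (s : Finset (Fin ((m + 1) * n + 1)))} * ((m + 1) * n + 1) =
    ((m + 1) * n + 1).choose n := by
  have := AddAction.card_eq_card_mul_card_of_existsUnique_vadd (G := Fin ((m + 1) * n + 1))
    (fun s : Set.powersetCard (Fin ((m + 1) * n + 1)) n => IsMDyck m s.val)
    fun s => by
      simpa only [Set.powersetCard.coe_vadd] using existsUnique_isMDyck_vadd m s.val s.2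
  rwa [Set.powersetCard.card, Nat.card_fin, eq_comm] at this

theorem card_mDyckSequences_eq_fussCatalan_general (m n : ℕ) (hn : 0 < n) :
    Nat.card {a : Fin n → ℕ //
      a ⟨0, hn⟩ = 0 ∧
      ∀ s : Fin n, ∀ h : (s : ℕ) + 1 < n, a ⟨(s : ℕ) + 1, h⟩ ≤ a s + m} * (m * n + 1) =
    Nat.choose ((m + 1) * n) n := by
  have hcard := card_isMDyck_mul_length m n
  rw [← Nat.card_congr ((mDyckSeqEquiv hn).trans
    (ofFinEmbEquiv.subtypeEquiv fun t => (isMDyck_ofFinEmbEquiv_iff m t).symm))] at hcard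
  apply Nat.eq_of_mul_eq_mul_right (Nat.succ_pos ((m + 1) * n))
  rw [Nat.choose_mul_succ_eq, ← hcard, show (m + 1) * n + 1 - n = m * n + 1 by
    rw [Nat.succ_mul]; omega, Nat.mul_right_comm]

/-- For `m ≥ 1`, `n ≥ 1`, the number of sequences `(a_1,…,a_n)` of nonnegative
integers with `a_1 = 0` and `a_{s+1} ≤ a_s + m` for `s = 1,…,n-1` equals the `n`-th
Fuss–Catalan number `c_n^(m) = (1/(mn+1)) * binomial((m+1)n, n)` (stated
multiplicatively to stay in `ℕ`). -/
theorem card_mDyckSequences_eq_fussCatalan (m n : ℕ) (hm : 1 ≤ m) (hn : 0 < n) :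
    Nat.card {a : Fin n → ℕ //
      a ⟨0, hn⟩ = 0 ∧
      ∀ s : Fin n, ∀ h : (s : ℕ) + 1 < n, a ⟨(s : ℕ) + 1, h⟩ ≤ a s + m} * (m * n + 1) =
    Nat.choose ((m + 1) * n) n :=
  card_mDyckSequences_eq_fussCatalan_general m n hn
end

section
/- For every m ≥ 1 and n ≥ 1, the number of pairs (σ, a), where σ is a permutation of {1,...,n} and a = (a_1,...,a_n) is a sequence of nonnegative integers with a_1 = 0, a_{s+1} ≤ a_s + m for all s, and σ(s) < σ(s+1) whenever a_{s+1} = a_s + m, equals (mn+1)^(n-1). -/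
/-!
Put `b s = m s - a s`. The path conditions say exactly that `b` is weakly increasing, that
`b s ≤ m s`, and that the labels increase along each run of equal values of `b`, which is the
tie-breaking rule of `Tuple.sort`. Hence `(σ, a) ↦ b ∘ σ⁻¹` is a bijection onto the
`m`-parking functions of length `n`, the `f` with `f (sort f s) ≤ m s`.

These are counted by Pollak's cyclic argument. For `u : Fin n → ℤ/(mn+1)`, consider the path that
rises by `m` at each point `u i + j (mn+1)` and falls by `1` at every integer. It loses height `1`
over each period, so exactly one of the `mn+1` translates `u - c` starts at a point the path never
goes below within a period, i.e. is a parking function. Hence there are `(mn+1)^n / (mn+1)` of them.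
-/

open Finset

section

variable {m n : ℕ}

def IsParkingFunction (m : ℕ) (f : Fin n → ℕ) : Prop :=
  ∀ k, 0 < k → k ≤ m * n → k ≤ m * #{i | f i < k}

theorem isParkingFunction_iff_sort_le (hm : 0 < m) (f : Fin n → ℕ) :
    IsParkingFunction m f ↔ ∀ s, f (Tuple.sort f s) ≤ m * s := by
  have lt_card_iff (s : Fin n) (k : ℕ) : (s : ℕ) < #{i | f i < k} ↔ f (Tuple.sort f s) < k := by
    have := Tuple.lt_card_lt_iff_apply_lt_of_monotone (a := k) (j := s) (Tuple.monotone_sort f)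
    rwa [card_equiv (Tuple.sort f) (t := {i | f i < k}) (by simp)] at this
  constructor
  · intro hf s
    have hs : s < #{i | f i < m * s + 1} := by
      have := hf (m * s + 1) (by omega) (by nlinarith [s.isLt])
      by_contra! h
      nlinarith
    exact Nat.lt_succ_iff.1 ((lt_card_iff s _).1 hs)
  · intro hf k hk hkn
    have hq : (k - 1) / m < n := (Nat.div_lt_iff_lt_mul hm).2 (by rw [mul_comm]; omega)
    have hs : f (Tuple.sort f ⟨_, hq⟩) < k := by
      have := Nat.mul_div_le (k - 1) m
      have := hf ⟨_, hq⟩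
      dsimp only at this
      omega
    calc k ≤ m * ((k - 1) / m + 1) := by have := Nat.lt_mul_div_succ (k - 1) hm; omega
      _ ≤ m * #{i | f i < k} := Nat.mul_le_mul_left m ((lt_card_iff _ k).2 hs)

theorem IsParkingFunction.lt (hm : 0 < m) {f : Fin n → ℕ} (hf : IsParkingFunction m f)
    (i : Fin n) : f i < m * n + 1 := by
  have h := (isParkingFunction_iff_sort_le hm f).1 hf ((Tuple.sort f).symm i)
  rw [Equiv.apply_symm_apply] at h
  have := Nat.mul_le_mul_left m ((Tuple.sort f).symm i).isLt.le
  omega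

theorem existsUnique_forall_le_add {N : ℕ} (hN : 0 < N) (D : ℕ → ℤ)
    (hD : ∀ q, D (q + N) = D q - 1) :
    ∃! c : Fin N, ∀ k, 0 < k → k < N → D c ≤ D (c + k) := by
  -- Minimising `(D c, c)` lexicographically picks the first minimiser of `D` on `[0, N)`.
  obtain ⟨c, -, hmin⟩ :=
    exists_min_image univ (fun c : Fin N => toLex (D c, c)) ⟨⟨0, hN⟩, mem_univ _⟩
  have hmin (r : ℕ) (hr : r < N) : D c < D r ∨ D c = D r ∧ (c : ℕ) ≤ r :=
    Prod.Lex.toLex_le_toLex.1 (hmin ⟨r, hr⟩ (mem_univ _))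
  have hc : ∀ k, 0 < k → k < N → D c ≤ D (c + k) := by
    intro k hk hkN
    by_cases h : c + k < N
    · have := hmin (c + k) h
      omega
    · have := hmin (c + k - N) (by omega)
      have := hD (c + k - N)
      rw [Nat.sub_add_cancel (by omega)] at this
      omega
  have not_lt_of_forall_le_add (c₁ c₂ : Fin N) (h₁ : ∀ k, 0 < k → k < N → D c₁ ≤ D (c₁ + k))
      (h₂ : ∀ k, 0 < k → k < N → D c₂ ≤ D (c₂ + k)) : ¬ c₁ < c₂ := by
    intro h
    have h₁ := h₁ (c₂ - c₁) (by omega) (by omega)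
    have h₂ := h₂ (c₁ + N - c₂) (by omega) (by omega)
    rw [show (c₁ : ℕ) + (c₂ - c₁) = c₂ by omega] at h₁
    rw [show (c₂ : ℕ) + (c₁ + N - c₂) = c₁ + N by omega, hD] at h₂
    omega
  exact ⟨c, hc, fun c' hc' => le_antisymm (not_lt.1 (not_lt_of_forall_le_add c c' hc hc'))
    (not_lt.1 (not_lt_of_forall_le_add c' c hc' hc))⟩

theorem ite_sub_lt_add_ite_lt {N : ℕ} (a c : Fin N) {k : ℕ} (hk : k ≤ N) :
    ((if ((a - c : Fin N) : ℕ) < k then 1 else 0) + if (a : ℕ) < c then 1 else 0) =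
      (if (a : ℕ) < (c + k) % N then 1 else 0) + (c + k) / N := by
  have hmod : (c + k) % N = if c + k < N then c + k else c + k - N := by
    split_ifs with h
    · exact Nat.mod_eq_of_lt h
    · rw [Nat.mod_eq_sub_mod (by omega), Nat.mod_eq_of_lt (by omega)]
  have hdiv : (c + k) / N = if c + k < N then 0 else 1 := by
    split_ifs with h
    · exact Nat.div_eq_of_lt h
    · rw [Nat.div_eq_sub_div (by omega) (by omega), Nat.div_eq_of_lt (by omega)]
  have hsub : ((a - c : Fin N) : ℕ) = if (c : ℕ) ≤ a then (a : ℕ) - c else N + a - c := by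
    split_ifs with h
    · exact Fin.coe_sub_iff_le.2 h
    · exact Fin.coe_sub_iff_lt.2 (not_le.1 h)
  rw [hmod, hdiv, hsub]
  have := a.isLt
  split_ifs <;> omega

theorem card_sub_lt_add_card_lt {N : ℕ} (u : Fin n → Fin N) (c : Fin N) {k : ℕ} (hk : k ≤ N) :
    #{i | ((u i - c : Fin N) : ℕ) < k} + #{i | (u i : ℕ) < c} =
      #{i | (u i : ℕ) < (c + k) % N} + n * ((c + k) / N) := by
  simp only [card_filter, ← sum_add_distrib, ite_sub_lt_add_ite_lt _ _ hk]
  simp [sum_add_distrib]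

/-- `m` times the number of points `u i + j (mn+1)` (`j : ℕ`) below `q`, minus `q`. -/
def height (m : ℕ) (u : Fin n → Fin (m * n + 1)) (q : ℕ) : ℤ :=
  m * (#{i | (u i : ℕ) < q % (m * n + 1)} + n * (q / (m * n + 1)) : ℕ) - q

theorem height_add_period (u : Fin n → Fin (m * n + 1)) (q : ℕ) :
    height m u (q + (m * n + 1)) = height m u q - 1 := by
  simp only [height, Nat.add_mod_right, Nat.add_div_right q (Nat.succ_pos _)]
  push_cast
  ring

theorem isParkingFunction_sub_iff (u : Fin n → Fin (m * n + 1)) (c : Fin (m * n + 1)) :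
    IsParkingFunction m (fun i => ((u i - c : Fin _) : ℕ)) ↔
      ∀ k, 0 < k → k < m * n + 1 → height m u c ≤ height m u (c + k) := by
  refine forall_congr' fun k => imp_congr_right fun _ => ?_
  rw [Nat.lt_succ_iff]
  refine imp_congr_right fun hk => ?_
  have hcount := card_sub_lt_add_card_lt u c (k := k) (by omega)
  simp only [height, Nat.mod_eq_of_lt c.isLt, Nat.div_eq_of_lt c.isLt, ← hcount]
  rw [← Nat.cast_le (α := ℤ)]
  push_cast
  constructor <;> intro <;> linarith

theorem existsUnique_isParkingFunction_sub (u : Fin n → Fin (m * n + 1)) :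
    ∃! c : Fin (m * n + 1), IsParkingFunction m (fun i => ((u i - c : Fin _) : ℕ)) := by
  simpa only [isParkingFunction_sub_iff] using
    existsUnique_forall_le_add (Nat.succ_pos _) (height m u) (height_add_period u)

theorem card_parkingFunctions (hm : 0 < m) (hn : 0 < n) :
    Nat.card {f : Fin n → ℕ // IsParkingFunction m f} = (m * n + 1) ^ (n - 1) := by
  choose shift hshift hunique using existsUnique_isParkingFunction_sub (m := m) (n := n)
  let e : {f : Fin n → ℕ // IsParkingFunction m f} × Fin (m * n + 1) ≃
      (Fin n → Fin (m * n + 1)) :=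
    { toFun := fun p i => Fin.ofNat _ (p.1.1 i) + p.2
      invFun := fun u => (⟨fun i => ((u i - shift u : Fin _) : ℕ), hshift u⟩, shift u)
      left_inv := by
        rintro ⟨⟨f, hf⟩, c⟩
        have hval (i : Fin n) : ((Fin.ofNat (m * n + 1) (f i) + c - c : Fin _) : ℕ) = f i := by
          rw [add_sub_cancel_right, Fin.val_ofNat, Nat.mod_eq_of_lt (hf.lt hm i)]
        have hc : shift (fun i => Fin.ofNat _ (f i) + c) = c :=
          (hunique _ c (by simpa only [hval] using hf)).symm
        exact Prod.ext (Subtype.ext (funext fun i => by simp only [hc, hval])) hc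
      right_inv := fun u => funext fun i => by simp }
  have hcard := Nat.card_congr e
  rw [Nat.card_prod, Nat.card_fun] at hcard
  simp only [Nat.card_eq_fintype_card, Fintype.card_fin] at hcard
  rw [← pow_sub_one_mul hn.ne'] at hcard
  exact Nat.eq_of_mul_eq_mul_right (Nat.succ_pos _) hcard

theorem eq_sort_iff_strictMono_toLex {α : Type*} [LinearOrder α] (σ : Equiv.Perm (Fin n))
    (f : Fin n → α) : σ = Tuple.sort f ↔ StrictMono fun s => toLex (f (σ s), σ s) :=
  Tuple.eq_sort_iff'

theorem Fin.strictMono_iff_lt_mk_add_one {α : Type*} [Preorder α] (f : Fin n → α) :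
    StrictMono f ↔ ∀ (s : Fin n) (h : (s : ℕ) + 1 < n), f s < f ⟨s + 1, h⟩ := by
  refine ⟨fun hf s h => hf (Fin.lt_def.2 (Nat.lt_succ_self _)), fun h => ?_⟩
  cases n with
  | zero => exact fun s => s.elim0
  | succ n => exact Fin.strictMono_iff_lt_succ.2 fun i => h i.castSucc (by simp)

def IsLabelledDyckPath (m : ℕ) (hn : 0 < n) (p : Equiv.Perm (Fin n) × (Fin n → ℕ)) : Prop :=
  p.2 ⟨0, hn⟩ = 0 ∧
    (∀ s : Fin n, ∀ h : (s : ℕ) + 1 < n, p.2 ⟨(s : ℕ) + 1, h⟩ ≤ p.2 s + m) ∧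
    (∀ s : Fin n, ∀ h : (s : ℕ) + 1 < n,
      p.2 ⟨(s : ℕ) + 1, h⟩ = p.2 s + m → p.1 s < p.1 ⟨(s : ℕ) + 1, h⟩)

/-- A maximal step `a (s + 1) = a s + m` is a tie `m s - a s = m (s + 1) - a (s + 1)`. -/
theorem isLabelledDyckPath_iff (hn : 0 < n) (σ : Equiv.Perm (Fin n)) (a : Fin n → ℕ) :
    IsLabelledDyckPath m hn (σ, a) ↔
      (∀ s, a s ≤ m * s) ∧ StrictMono fun s => toLex (m * s - a s, σ s) := by
  rw [Fin.strictMono_iff_lt_mk_add_one]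
  constructor
  · rintro ⟨h0, hstep, hties⟩
    have hle : ∀ s : Fin n, a s ≤ m * s := by
      rintro ⟨j, hj⟩
      induction j with
      | zero => exact h0.le.trans (Nat.zero_le _)
      | succ j ih =>
        have := hstep ⟨j, by omega⟩ hj
        have := ih (by omega)
        dsimp only at *
        rw [Nat.mul_succ]
        omega
    refine ⟨hle, fun s h => Prod.Lex.toLex_lt_toLex.2 ?_⟩
    have := hle s
    have := hle ⟨s + 1, h⟩
    have := hstep s h
    dsimp only at *
    rw [Nat.mul_succ] at *
    by_cases heq : a ⟨s + 1, h⟩ = a s + m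
    · exact .inr ⟨by omega, hties s h heq⟩
    · exact .inl (by omega)
  · rintro ⟨hle, hmono⟩
    refine ⟨by simpa using hle ⟨0, hn⟩, fun s h => ?_, fun s h heq => ?_⟩ <;>
    · have := hle s
      have := hle ⟨s + 1, h⟩
      have := Prod.Lex.toLex_lt_toLex.1 (hmono s h)
      dsimp only at *
      rw [Nat.mul_succ] at *
      omega

theorem sort_eq_of_isLabelledDyckPath (hn : 0 < n) {σ : Equiv.Perm (Fin n)} {a : Fin n → ℕ}
    (h : IsLabelledDyckPath m hn (σ, a)) :
    Tuple.sort (fun i => m * σ.symm i - a (σ.symm i)) = σ :=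
  ((eq_sort_iff_strictMono_toLex σ _).2
    (by simpa using ((isLabelledDyckPath_iff hn σ a).1 h).2)).symm

noncomputable def parkingFunctionEquivLabelledDyckPath (hm : 0 < m) (hn : 0 < n) :
    {f : Fin n → ℕ // IsParkingFunction m f} ≃ {p // IsLabelledDyckPath m hn p} where
  toFun f := ⟨(Tuple.sort f.1, fun s => m * s - f.1 (Tuple.sort f.1 s)), by
    have hle := (isParkingFunction_iff_sort_le hm f.1).1 f.2
    refine (isLabelledDyckPath_iff hn _ _).2 ⟨fun s => Nat.sub_le _ _, ?_⟩
    simpa only [Nat.sub_sub_self (hle _)] using (eq_sort_iff_strictMono_toLex _ f.1).1 rfl⟩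
  invFun p := ⟨fun i => m * p.1.1.symm i - p.1.2 (p.1.1.symm i), by
    rw [isParkingFunction_iff_sort_le hm, sort_eq_of_isLabelledDyckPath hn p.2]
    simp⟩
  left_inv f := by
    have hle := (isParkingFunction_iff_sort_le hm f.1).1 f.2
    ext i
    obtain ⟨s, rfl⟩ := (Tuple.sort f.1).surjective i
    simp [Nat.sub_sub_self (hle s)]
  right_inv := by
    rintro ⟨⟨σ, a⟩, hp⟩
    have hle := ((isLabelledDyckPath_iff hn σ a).1 hp).1
    refine Subtype.ext (Prod.ext (sort_eq_of_isLabelledDyckPath hn hp) (funext fun s => ?_))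
    simp [sort_eq_of_isLabelledDyckPath hn hp, Nat.sub_sub_self (hle s)]

end

/-- For `m ≥ 1`, `n ≥ 1`, the number of pairs `(σ, a)` with `σ` a permutation of
`{1,…,n}` and `a = (a_1,…,a_n)` a sequence of nonnegative integers with `a_1 = 0`,
`a_{s+1} ≤ a_s + m` for all `s`, and `σ(s) < σ(s+1)` whenever `a_{s+1} = a_s + m`,
equals `(mn+1)^(n-1)`. -/
theorem card_labelled_mDyckPaths (m n : ℕ) (hm : 1 ≤ m) (hn : 0 < n) :
    Nat.card {p : Equiv.Perm (Fin n) × (Fin n → ℕ) //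
      p.2 ⟨0, hn⟩ = 0 ∧
      (∀ s : Fin n, ∀ h : (s : ℕ) + 1 < n, p.2 ⟨(s : ℕ) + 1, h⟩ ≤ p.2 s + m) ∧
      (∀ s : Fin n, ∀ h : (s : ℕ) + 1 < n,
        p.2 ⟨(s : ℕ) + 1, h⟩ = p.2 s + m → p.1 s < p.1 ⟨(s : ℕ) + 1, h⟩)} =
    (m * n + 1) ^ (n - 1) :=
  (Nat.card_congr (parkingFunctionEquivLabelledDyckPath hm hn)).symm.trans
    (card_parkingFunctions hm hn)
end

section
/- In the induced module 𝔐 over the algebra 𝔄 (with relations {e[i], e[j]} = {e[i+1], e[j-1]}), for any vector v annihilated by all e[i] with i > 0, and any i ≥ 2 and j ≤ i - 2, one has e[j]e[i] = e[j+1]e[i-1] + e[i-1]e[j+1] - e[i]e[j] as operators, allowing reduction of the rightmost index; consequently the vectors v e[i_1]···e[i_n] with i_1 = 0, i_s ≥ 0, and i_{s+1} ≤ i_s + 1 span the image 𝔓_n of 𝔄_{≥0}^{⊗n} in 𝔐. -/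
/-!
Applied to an adjacent pair `e[a]e[b]` with `a + 2 ≤ b`, the relation replaces it by three pairs
with the same index sum and a smaller right index, so the weight `∑ₖ (k + 1) iₖ` of the word drops.
Hence every word is a combination of words with `i_{s+1} ≤ i_s + 1`, and such a word either starts
with `e[0]` or lies in the right ideal generated by the `e[k]`, `k > 0`.
-/

/-- The defining relations of the algebra `𝔄`: for all `i j : ℤ`,
`e[i]e[j] + e[j]e[i] = e[i+1]e[j-1] + e[j-1]e[i+1]` in the free associative
`ℂ`-algebra on generators `e[i]`, `i : ℤ`. -/
inductive CatalanRel : FreeAlgebra ℂ ℤ → FreeAlgebra ℂ ℤ → Prop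
  | rel (i j : ℤ) : CatalanRel
      (FreeAlgebra.ι ℂ i * FreeAlgebra.ι ℂ j + FreeAlgebra.ι ℂ j * FreeAlgebra.ι ℂ i)
      (FreeAlgebra.ι ℂ (i + 1) * FreeAlgebra.ι ℂ (j - 1) +
        FreeAlgebra.ι ℂ (j - 1) * FreeAlgebra.ι ℂ (i + 1))

/-- The algebra `𝔄` with generators `e[i]`, `i ∈ ℤ`, and relations
`{e[i], e[j]} = {e[i+1], e[j-1]}`. -/
abbrev CatalanAlg : Type := RingQuot CatalanRel

/-- The generator `e[i]` of `𝔄`. -/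
noncomputable def gen (i : ℤ) : CatalanAlg :=
  RingQuot.mkAlgHom ℂ CatalanRel (FreeAlgebra.ι ℂ i)

theorem gen_anticomm (i j : ℤ) :
    gen i * gen j + gen j * gen i = gen (i + 1) * gen (j - 1) + gen (j - 1) * gen (i + 1) := by
  simpa only [gen, map_mul, map_add] using RingQuot.mkAlgHom_rel ℂ (CatalanRel.rel i j)

theorem gen_mul_gen (i j : ℤ) :
    gen i * gen j = gen (i + 1) * gen (j - 1) + gen (j - 1) * gen (i + 1) - gen j * gen i :=
  eq_sub_of_add_eq (gen_anticomm i j)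

noncomputable def word (l : List ℕ) : CatalanAlg :=
  (l.map fun m : ℕ => gen m).prod

theorem word_cons (a : ℕ) (l : List ℕ) : word (a :: l) = gen a * word l := by
  simp [word]

theorem word_append (l₁ l₂ : List ℕ) : word (l₁ ++ l₂) = word l₁ * word l₂ := by
  simp [word]

theorem word_cons_cons (a b : ℕ) (l : List ℕ) :
    word (a :: (b + 1) :: l) =
      word ((a + 1) :: b :: l) + word (b :: (a + 1) :: l) - word ((b + 1) :: a :: l) := by
  have h := gen_mul_gen a (b + 1)
  rw [add_sub_cancel_right] at h
  simp only [word_cons, Nat.cast_add, Nat.cast_one]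
  rw [← mul_assoc, h]
  simp only [add_mul, sub_mul, mul_assoc]

theorem word_append_cons_cons (l₁ l₂ : List ℕ) (a b : ℕ) :
    word (l₁ ++ a :: (b + 1) :: l₂) =
      word (l₁ ++ (a + 1) :: b :: l₂) + word (l₁ ++ b :: (a + 1) :: l₂) -
        word (l₁ ++ (b + 1) :: a :: l₂) := by
  rw [word_append, word_cons_cons, word_append, word_append, word_append, mul_sub, mul_add]

/-- `weight l = ∑ k, (k + 1) * l[k]`. -/
def weight : List ℕ → ℕ
  | [] => 0
  | a :: l => a + l.sum + weight l

theorem weight_append_cons_cons_lt (l₁ l₂ : List ℕ) {a b u v : ℕ} (huv : u + v = a + b)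
    (hv : v < b) : weight (l₁ ++ u :: v :: l₂) < weight (l₁ ++ a :: b :: l₂) := by
  induction l₁ with
  | nil => simp only [weight, List.nil_append, List.sum_cons]; omega
  | cons x l₁ ih => simp only [weight, List.cons_append, List.sum_append, List.sum_cons]; omega

def admissibleWords (n : ℕ) : Set CatalanAlg :=
  {x | ∃ j : Fin n → ℕ,
    (∀ h : 0 < n, j ⟨0, h⟩ = 0) ∧
    (∀ s : Fin n, ∀ h : (s : ℕ) + 1 < n, j ⟨(s : ℕ) + 1, h⟩ ≤ j s + 1) ∧
    x = (List.ofFn fun s => gen (j s)).prod}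

def positiveLeftMultiples : Set CatalanAlg :=
  {x | ∃ k : ℤ, 0 < k ∧ ∃ a : CatalanAlg, x = gen k * a}

theorem word_mem_admissibleWords {l : List ℕ} (hl : l.IsChain fun a b => b ≤ a + 1)
    (h₀ : ∀ h : 0 < l.length, l[0] = 0) : word l ∈ admissibleWords l.length :=
  ⟨fun s => l[s], h₀, fun s h => List.isChain_iff_getElem.mp hl s h,
    congrArg List.prod (List.ofFn_getElem_eq_map l fun m : ℕ => gen m).symm⟩

theorem word_mem_span_admissibleWords_union (l : List ℕ) :
    word l ∈ Submodule.span ℂ (admissibleWords l.length ∪ positiveLeftMultiples) := by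
  by_cases hl : l.IsChain fun a b => b ≤ a + 1
  · apply Submodule.subset_span
    rcases l with _ | ⟨_ | a, l⟩
    · exact Or.inl (word_mem_admissibleWords hl nofun)
    · exact Or.inl (word_mem_admissibleWords hl fun _ => rfl)
    · exact Or.inr ⟨a + 1, by omega, word l, by rw [word_cons]; push_cast; rfl⟩
  · obtain ⟨a, b, l₁, l₂, rfl, hab⟩ :
        ∃ a b l₁ l₂, l = l₁ ++ a :: b :: l₂ ∧ a + 1 < b := by
      simpa [List.isChain_iff_forall_rel_of_append_cons_cons] using hl
    obtain ⟨b, rfl⟩ : ∃ c, b = c + 1 := ⟨b - 1, by omega⟩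
    have h₁ := word_mem_span_admissibleWords_union (l₁ ++ (a + 1) :: b :: l₂)
    have h₂ := word_mem_span_admissibleWords_union (l₁ ++ b :: (a + 1) :: l₂)
    have h₃ := word_mem_span_admissibleWords_union (l₁ ++ (b + 1) :: a :: l₂)
    simp only [List.length_append, List.length_cons] at h₁ h₂ h₃ ⊢
    rw [word_append_cons_cons]
    exact sub_mem (add_mem h₁ h₂) h₃
termination_by weight l
decreasing_by all_goals subst_vars; apply weight_append_cons_cons_lt <;> omega

/-- In the algebra `𝔄` (with relations `{e[i],e[j]} = {e[i+1],e[j-1]}`), for any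
`i ≥ 2` and `j ≤ i - 2` one has
`e[j]e[i] = e[j+1]e[i-1] + e[i-1]e[j+1] - e[i]e[j]`, allowing reduction of the
rightmost index; consequently, modulo the right ideal generated by the `e[k]` with
`k > 0` (which annihilates the vacuum `v` of the induced module `𝔐`), the vectors
`v e[i_1]⋯e[i_n]` with `i_1 = 0`, `i_s ≥ 0` and `i_{s+1} ≤ i_s + 1` span the image
`𝔓_n` of `𝔄_{≥0}^{⊗n}` in `𝔐`. -/
theorem reduction_and_spanning :
    (∀ i j : ℤ, 2 ≤ i → j ≤ i - 2 →
      gen j * gen i =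
        gen (j + 1) * gen (i - 1) + gen (i - 1) * gen (j + 1) - gen i * gen j) ∧
    (∀ (n : ℕ) (i : Fin n → ℕ),
      (List.ofFn fun s => gen (i s)).prod ∈
        Submodule.span ℂ
          ({x : CatalanAlg | ∃ j : Fin n → ℕ,
              (∀ h : 0 < n, j ⟨0, h⟩ = 0) ∧
              (∀ s : Fin n, ∀ h : (s : ℕ) + 1 < n, j ⟨(s : ℕ) + 1, h⟩ ≤ j s + 1) ∧
              x = (List.ofFn fun s => gen (j s)).prod} ∪
           {x : CatalanAlg | ∃ k : ℤ, 0 < k ∧ ∃ a : CatalanAlg, x = gen k * a})) := by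
  refine ⟨fun i j _ _ => gen_mul_gen j i, fun n i => ?_⟩
  have h := word_mem_span_admissibleWords_union (List.ofFn i)
  rwa [word, List.map_ofFn, List.length_ofFn] at h
end
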